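/- Let W, N, Z be random variables with N independent of (W, Z). Suppose the cumulant generating function ψ(λ) = log E_{P_W ⊗ P_N ⊗ μ}[exp(λ(ℓ(W+N,Z) − E[ℓ(W+N,Z)]))] satisfies ψ(λ) ≤ ψ̄(λ) for λ ∈ [0, b₊]. Then E[ℓ(W+N,Z)] − E_{P_W ⊗ P_N ⊗ μ}[ℓ(W+N,Z)] ≤ inf_{λ ∈ (0,b₊]} (I(W;Z) + ψ̄(λ))/λ, where the first expectation is under the true joint distribution P_{W,N,Z} and Z ~ μ marginally. -/

import Mathlib

open Real Finset

lemma dv_bound {Ω : Type*} [Fintype Ω] (p q g : Ω → ℝ)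
    (hp0 : ∀ x, 0 ≤ p x) (hq0 : ∀ x, 0 ≤ q x)
    (hp1 : ∑ x, p x = 1)
    (habs : ∀ x, 0 < p x → 0 < q x)
    (S : ℝ) (hS : S = ∑ x, q x * Real.exp (g x)) (hSpos : 0 < S) :
    ∑ x, p x * g x ≤ (∑ x, p x * Real.log (p x / q x)) + Real.log S := by
  have key : ∀ x, p x * g x - p x * Real.log (p x / q x) - p x * Real.log S
      ≤ q x * Real.exp (g x) / S - p x := by
    intro x
    rcases (hp0 x).lt_or_eq with hp | hp
    · have hq := habs x hp
      have hr : 0 < q x * Real.exp (g x) / S := by positivity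
      have h1 : Real.log (q x * Real.exp (g x) / S / p x)
          = g x - Real.log (p x / q x) - Real.log S := by
        rw [Real.log_div hr.ne' hp.ne', Real.log_div (by positivity) hSpos.ne',
          Real.log_mul hq.ne' (Real.exp_ne_zero _), Real.log_exp,
          Real.log_div hp.ne' hq.ne']
        ring
      have h2 : Real.log (q x * Real.exp (g x) / S / p x)
          ≤ q x * Real.exp (g x) / S / p x - 1 :=
        Real.log_le_sub_one_of_pos (by positivity)
      have h3 := mul_le_mul_of_nonneg_left h2 hp.le
      rw [h1] at h3
      have h4 : p x * (q x * Real.exp (g x) / S / p x - 1)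
          = q x * Real.exp (g x) / S - p x := by
        field_simp
      nlinarith [h3, h4]
    · rw [← hp]
      have : 0 ≤ q x * Real.exp (g x) / S := div_nonneg (mul_nonneg (hq0 x) (Real.exp_pos _).le) hSpos.le
      nlinarith
  have hsum := Finset.sum_le_sum (fun x (_ : x ∈ Finset.univ) => key x)
  have e1 : ∑ x, (p x * g x - p x * Real.log (p x / q x) - p x * Real.log S)
      = (∑ x, p x * g x) - (∑ x, p x * Real.log (p x / q x)) - Real.log S := by
    rw [Finset.sum_sub_distrib, Finset.sum_sub_distrib, ← Finset.sum_mul, hp1, one_mul]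
  have e2 : ∑ x, (q x * Real.exp (g x) / S - p x) = 0 := by
    rw [Finset.sum_sub_distrib, ← Finset.sum_div, ← hS, div_self hSpos.ne', hp1, sub_self]
  rw [e1, e2] at hsum
  linarith

/-- **Mutual-information generalization bound.** `W`, `N`, `Z` take values in finite
alphabets `ΩW`, `ΩN`, `ΩZ` embedded in `ℝ` (via `w`, `n`) with `N` independent of `(W,Z)`:
the true joint pmf is `p(a,b,c) = pWZ(a,c)·pN(b)`.  If the centered cumulant generating
function of `ℓ(W+N,Z)` under the product distribution `P_W ⊗ P_N ⊗ μ` is bounded by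
`ψ̄(λ)` on `[0, b₊]`, then
`E[ℓ(W+N,Z)] − E_{P_W ⊗ P_N ⊗ μ}[ℓ(W+N,Z)] ≤ inf_{λ ∈ (0,b₊]} (I(W;Z) + ψ̄(λ))/λ`. -/
theorem gen_error_bound_via_cgf
    {ΩW ΩN ΩZ : Type*} [Fintype ΩW] [Fintype ΩN] [Fintype ΩZ]
    (w : ΩW → ℝ) (n : ΩN → ℝ) (ℓ : ℝ → ΩZ → ℝ)
    (pWZ : ΩW × ΩZ → ℝ) (pN : ΩN → ℝ)
    (hWZ0 : ∀ a, 0 ≤ pWZ a) (hWZ1 : ∑ a, pWZ a = 1)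
    (hN0 : ∀ b, 0 ≤ pN b) (hN1 : ∑ b, pN b = 1)
    (pW : ΩW → ℝ) (hpW : ∀ a, pW a = ∑ c, pWZ (a, c))
    (μ : ΩZ → ℝ) (hμ : ∀ c, μ c = ∑ a, pWZ (a, c))
    (Ebar : ℝ)
    (hEbar : Ebar = ∑ a, ∑ b, ∑ c, pW a * pN b * μ c * ℓ (w a + n b) c)
    (I : ℝ)
    (hI : I = ∑ a, ∑ c, pWZ (a, c) * Real.log (pWZ (a, c) / (pW a * μ c)))
    (bplus : ℝ) (hb : 0 < bplus)
    (ψbar : ℝ → ℝ)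
    (hψ : ∀ l ∈ Set.Icc 0 bplus,
      Real.log (∑ a, ∑ b, ∑ c,
          pW a * pN b * μ c * Real.exp (l * (ℓ (w a + n b) c - Ebar))) ≤ ψbar l) :
    (∑ a, ∑ b, ∑ c, pWZ (a, c) * pN b * ℓ (w a + n b) c) - Ebar ≤
      ⨅ l : Set.Ioc 0 bplus, (I + ψbar l) / (l : ℝ) := by
  have hne : Nonempty (Set.Ioc (0:ℝ) bplus) := ⟨⟨bplus, hb, le_refl _⟩⟩
  have hpW0 : ∀ a, 0 ≤ pW a := fun a => by
    rw [hpW]; exact Finset.sum_nonneg fun c _ => hWZ0 _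
  have hμ0 : ∀ c, 0 ≤ μ c := fun c => by
    rw [hμ]; exact Finset.sum_nonneg fun a _ => hWZ0 _
  apply le_ciInf
  rintro ⟨l, hl0, hlb⟩
  show _ - Ebar ≤ (I + ψbar l) / l
  rw [le_div_iff₀ hl0]
  -- notation
  set p : ΩW × ΩN × ΩZ → ℝ := fun x => pWZ (x.1, x.2.2) * pN x.2.1 with hpdef
  set q : ΩW × ΩN × ΩZ → ℝ := fun x => pW x.1 * pN x.2.1 * μ x.2.2 with hqdef
  set g : ΩW × ΩN × ΩZ → ℝ := fun x => l * (ℓ (w x.1 + n x.2.1) x.2.2 - Ebar) with hgdef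
  have hp0 : ∀ x, 0 ≤ p x := fun x => mul_nonneg (hWZ0 _) (hN0 _)
  have hq0 : ∀ x, 0 ≤ q x := fun x => mul_nonneg (mul_nonneg (hpW0 _) (hN0 _)) (hμ0 _)
  have hWZ1' : ∑ a, ∑ c, pWZ (a, c) = 1 := by
    rw [← Fintype.sum_prod_type]; exact hWZ1
  have hp1 : ∑ x, p x = 1 := by
    calc ∑ x, p x = ∑ a, ∑ b, ∑ c, pWZ (a, c) * pN b := by
          simp [hpdef, Fintype.sum_prod_type]
      _ = ∑ a, ∑ b, (∑ c, pWZ (a, c)) * pN b := by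
          simp [Finset.sum_mul]
      _ = ∑ a, (∑ c, pWZ (a, c)) * ∑ b, pN b := by
          simp [Finset.mul_sum]
      _ = 1 := by rw [hN1]; simpa using hWZ1'
  have hq1 : ∑ x, q x = 1 := by
    have hμ1 : ∑ c, μ c = 1 := by
      calc ∑ c, μ c = ∑ c, ∑ a, pWZ (a, c) := by simp [hμ]
        _ = ∑ a, ∑ c, pWZ (a, c) := Finset.sum_comm
        _ = 1 := hWZ1'
    have hpW1 : ∑ a, pW a = 1 := by
      calc ∑ a, pW a = ∑ a, ∑ c, pWZ (a, c) := by simp [hpW]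
        _ = 1 := hWZ1'
    calc ∑ x, q x = ∑ a, ∑ b, ∑ c, pW a * pN b * μ c := by
          simp [hqdef, Fintype.sum_prod_type]
      _ = ∑ a, ∑ b, pW a * pN b * ∑ c, μ c := by
          simp [Finset.mul_sum]
      _ = ∑ a, (∑ b, pN b) * pW a := by
          rw [hμ1]; simp [Finset.mul_sum, mul_comm]
      _ = 1 := by rw [hN1]; simpa using hpW1
  have habs : ∀ x, 0 < p x → 0 < q x := by
    rintro ⟨a, b, c⟩ hx
    have h1 : pWZ (a, c) ≠ 0 ∧ pN b ≠ 0 := mul_ne_zero_iff.mp hx.ne'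
    have hWZpos : 0 < pWZ (a, c) := (hWZ0 _).lt_of_ne (Ne.symm h1.1)
    have hNpos : 0 < pN b := (hN0 _).lt_of_ne (Ne.symm h1.2)
    have hWpos : 0 < pW a := by
      rw [hpW]
      exact lt_of_lt_of_le hWZpos
        (Finset.single_le_sum (f := fun c => pWZ (a, c)) (fun c _ => hWZ0 _)
          (Finset.mem_univ c))
    have hμpos : 0 < μ c := by
      rw [hμ]
      exact lt_of_lt_of_le hWZpos
        (Finset.single_le_sum (f := fun a => pWZ (a, c)) (fun a _ => hWZ0 _)
          (Finset.mem_univ a))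
    exact mul_pos (mul_pos hWpos hNpos) hμpos
  set S : ℝ := ∑ x, q x * Real.exp (g x) with hSdef
  have hSpos : 0 < S := by
    apply Finset.sum_pos' (fun x _ => mul_nonneg (hq0 x) (Real.exp_pos _).le)
    have : ∃ x, 0 < q x := by
      by_contra h
      push_neg at h
      have : ∑ x, q x = 0 := Finset.sum_eq_zero fun x _ => le_antisymm (h x) (hq0 x)
      rw [hq1] at this; norm_num at this
    obtain ⟨x, hx⟩ := this
    exact ⟨x, Finset.mem_univ x, mul_pos hx (Real.exp_pos _)⟩
  have hdv := dv_bound p q g hp0 hq0 hp1 habs S hSdef hSpos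
  -- identify the three sums
  have hA : ∑ x, p x * g x
      = ((∑ a, ∑ b, ∑ c, pWZ (a, c) * pN b * ℓ (w a + n b) c) - Ebar) * l := by
    have : ∀ x, p x * g x = l * (p x * ℓ (w x.1 + n x.2.1) x.2.2) - (Ebar * l) * p x := by
      intro x; simp only [hgdef]; ring
    calc ∑ x, p x * g x
        = ∑ x, (l * (p x * ℓ (w x.1 + n x.2.1) x.2.2) - (Ebar * l) * p x) := by
          exact Finset.sum_congr rfl fun x _ => this x
      _ = l * (∑ x, p x * ℓ (w x.1 + n x.2.1) x.2.2) - (Ebar * l) * ∑ x, p x := by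
          rw [Finset.sum_sub_distrib, Finset.mul_sum, Finset.mul_sum]
      _ = _ := by
          rw [hp1]
          have : ∑ x, p x * ℓ (w x.1 + n x.2.1) x.2.2
              = ∑ a, ∑ b, ∑ c, pWZ (a, c) * pN b * ℓ (w a + n b) c := by
            simp [hpdef, Fintype.sum_prod_type]
          rw [this]; ring
  have hKL : ∑ x, p x * Real.log (p x / q x) = I := by
    have hterm : ∀ (a : ΩW) (b : ΩN) (c : ΩZ),
        pWZ (a, c) * pN b * Real.log (pWZ (a, c) * pN b / (pW a * pN b * μ c))
        = pN b * (pWZ (a, c) * Real.log (pWZ (a, c) / (pW a * μ c))) := by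
      intro a b c
      rcases eq_or_ne (pN b) 0 with h | h
      · simp [h]
      · have e : pWZ (a, c) * pN b / (pW a * pN b * μ c)
            = pWZ (a, c) / (pW a * μ c) := by
          rw [show pW a * pN b * μ c = pN b * (pW a * μ c) by ring,
            show pWZ (a, c) * pN b = pN b * pWZ (a, c) by ring,
            mul_div_mul_left _ _ h]
        rw [e]; ring
    calc ∑ x, p x * Real.log (p x / q x)
        = ∑ a, ∑ b, ∑ c, pN b * (pWZ (a, c) * Real.log (pWZ (a, c) / (pW a * μ c))) := by
          simp only [hpdef, hqdef, Fintype.sum_prod_type]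
          exact Finset.sum_congr rfl fun a _ => Finset.sum_congr rfl fun b _ =>
            Finset.sum_congr rfl fun c _ => hterm a b c
      _ = ∑ a, ∑ c, ∑ b, pN b * (pWZ (a, c) * Real.log (pWZ (a, c) / (pW a * μ c))) :=
          Finset.sum_congr rfl fun a _ => Finset.sum_comm
      _ = I := by
          rw [hI]
          refine Finset.sum_congr rfl fun a _ => Finset.sum_congr rfl fun c _ => ?_
          rw [← Finset.sum_mul, hN1, one_mul]
  have hlogS : Real.log S ≤ ψbar l := by
    have : S = ∑ a, ∑ b, ∑ c,
        pW a * pN b * μ c * Real.exp (l * (ℓ (w a + n b) c - Ebar)) := by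
      simp [hSdef, hqdef, hgdef, Fintype.sum_prod_type]
    rw [this]
    exact hψ l ⟨hl0.le, hlb⟩
  rw [hA, hKL] at hdv
  linarith
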